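/- arXiv:2310.10468 — 3 statements merged into one kernel-verified Lean document; each statement's English description precedes it below -/
import Mathlib

section
/- Let G = (ℤ/pℤ)^m and let Ω* denote the set of subgroups of G of index at most p. Writing N_H = Σ_{τ ∈ H} τ ∈ ℤ[G] for H ≤ G, one has the identity Σ_{H ∈ Ω*} N_H + ((p^{m−1} − 1) − Σ_{i=0}^{m−1} p^i) · N_G = p^{m−1} · 1 in the group ring ℤ[G]. -/
/-!
Compare coefficients at `g`. On the left, the coefficient is the number of `H ∈ Ω*` containing `g`
plus the constant. Subgroups of `G` are the `𝔽_p`-subspaces `W` of `𝔽_p^m`, and `H ∈ Ω*` means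
`codim W ≤ 1`. Under `W ↦ W^⊥`, the subspaces of codimension `≤ 1` that contain `g` correspond to
the subspaces of dimension `≤ 1` of `g^⊥ ⊆ (𝔽_p^m)^*`. These are `0` together with the points of
the projective space `ℙ(g^⊥)`, so there are `1 + ∑_{i < dim g^⊥} p^i` of them. Since
`dim g^⊥ = m` for `g = 1` and `m - 1` otherwise, the identity reduces to
`∑_{i<m} p^i = ∑_{i<m-1} p^i + p^(m-1)`.
-/

open Module MonoidAlgebra
open scoped LinearAlgebra.Projectivization

section GroupRing

variable {R G : Type*} [Semiring R] [Finite G]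

lemma coeff_finsum_mem_of [MulOneClass G] (P : G → Prop) (g : G) [Decidable (P g)] :
    (∑ᶠ (τ : G) (_ : P τ), of R G τ).coeff g = if P g then 1 else 0 := by
  classical
  have := Fintype.ofFinite G
  rw [finsum_eq_sum_of_fintype, coeff_sum, Finset.sum_apply', Fintype.sum_eq_single g]
  · simp [finsum_eq_if, apply_ite (fun x : R[G] => x.coeff g)]
  · intro τ hτ
    simp [finsum_eq_if, apply_ite (fun x : R[G] => x.coeff g), hτ]

lemma coeff_finsum_of [MulOneClass G] (g : G) : (∑ᶠ τ : G, of R G τ).coeff g = 1 := by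
  simpa using coeff_finsum_mem_of (R := R) (fun _ => True) g

lemma coeff_finsum_finsum_mem_of [Group G] (P : Subgroup G → Prop) (g : G) :
    (∑ᶠ (H : Subgroup G) (_ : P H), ∑ᶠ (τ : G) (_ : τ ∈ H), of R G τ).coeff g =
      Nat.card {H // P H ∧ g ∈ H} := by
  classical
  have := Fintype.ofFinite (Subgroup G)
  rw [finsum_eq_sum_of_fintype, coeff_sum, Finset.sum_apply']
  simp only [finsum_eq_if (p := P _), apply_ite (fun x : R[G] => x.coeff g), coeff_zero,
    Finsupp.coe_zero, Pi.zero_apply, coeff_finsum_mem_of, ← ite_and, Finset.sum_boole]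
  simp [Nat.card_eq_fintype_card, Fintype.card_subtype]

end GroupRing

lemma Submodule.index_toAddSubgroup {K M : Type*} [DivisionRing K] [AddCommGroup M] [Module K M]
    [Module.Finite K M] (W : Submodule K M) :
    W.toAddSubgroup.index = Nat.card K ^ finrank K (M ⧸ W) :=
  Module.natCard_eq_pow_finrank (V := M ⧸ W)

section Subspaces

variable {K M : Type*} [Field K] [AddCommGroup M] [Module K M]

lemma card_submodule_finrank_le_one [Finite K] [FiniteDimensional K M] :
    Nat.card {U : Submodule K M // finrank K U ≤ 1} = 1 + Nat.card (ℙ K M) := by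
  classical
  have : Finite M := Module.finite_of_finite K
  have hdisj : Disjoint (fun U : Submodule K M => U = ⊥) (fun U => finrank K U = 1) := by
    rw [Pi.disjoint_iff]; intro U; simp only [Prop.disjoint_iff]; rintro ⟨rfl, h⟩; simp at h
  have hsplit (U : Submodule K M) : finrank K U ≤ 1 ↔ U = ⊥ ∨ finrank K U = 1 := by
    rw [← Submodule.finrank_eq_zero]; omega
  rw [Nat.card_congr ((Equiv.subtypeEquivRight hsplit).trans (subtypeOrEquiv _ _ hdisj)),
    Nat.card_sum, Nat.card_unique, Nat.card_congr (Projectivization.equivSubmodule K M)]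

def submoduleFinrankLeEquiv (A : Submodule K M) (n : ℕ) :
    {U : Submodule K A // finrank K U ≤ n} ≃ {U : Submodule K M // finrank K U ≤ n ∧ U ≤ A} :=
  ((Submodule.MapSubtype.orderIso A).toEquiv.subtypeEquiv fun U => by
      rw [← Submodule.finrank_map_subtype_eq A U]; rfl).trans
    (Equiv.subtypeSubtypeEquivSubtypeInter (· ≤ A) (fun U => finrank K U ≤ n)) |>.trans
    (Equiv.subtypeEquivRight fun _ => and_comm)

def codimLeMemEquiv [FiniteDimensional K M] (n : ℕ) (g : M) :
    {W : Submodule K M // finrank K (M ⧸ W) ≤ n ∧ g ∈ W} ≃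
      {U : Submodule K (Dual K M) // finrank K U ≤ n ∧ U ≤ (K ∙ g).dualAnnihilator} :=
  (Subspace.orderIsoFiniteDimensional.toEquiv.trans OrderDual.ofDual).subtypeEquiv fun W => by
    change _ ↔ finrank K W.dualAnnihilator ≤ n ∧ W.dualAnnihilator ≤ _
    rw [W.quotEquivAnnihilator.finrank_eq, Subspace.dualAnnihilator_le_dualAnnihilator_iff,
      Submodule.span_singleton_le_iff_mem]

lemma card_codim_le_one_mem [Finite K] [FiniteDimensional K M] (g : M) :
    Nat.card {W : Submodule K M // finrank K (M ⧸ W) ≤ 1 ∧ g ∈ W} =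
      1 + ∑ i ∈ Finset.range (finrank K (K ∙ g).dualAnnihilator), Nat.card K ^ i := by
  rw [Nat.card_congr (codimLeMemEquiv 1 g), ← Nat.card_congr (submoduleFinrankLeEquiv _ 1)]
  exact card_submodule_finrank_le_one.trans
    (congrArg (1 + ·) (Projectivization.card_of_finrank K (K ∙ g).dualAnnihilator rfl))

end Subspaces

lemma card_subgroup_index_le_mem {p : ℕ} [hp : Fact p.Prime] {V : Type*} [AddCommGroup V]
    [Module (ZMod p) V] [Finite V] (g : Multiplicative V) :
    Nat.card {H : Subgroup (Multiplicative V) // H.index ≤ p ∧ g ∈ H} =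
      Nat.card {W : Submodule (ZMod p) V // finrank (ZMod p) (V ⧸ W) ≤ 1 ∧ g.toAdd ∈ W} := by
  refine Nat.card_congr (((AddSubgroup.toZModSubmodule p).symm.trans
    AddSubgroup.toSubgroup).toEquiv.subtypeEquiv fun W => ?_).symm
  have : Module.Finite (ZMod p) V := Module.Finite.of_finite
  have hle : finrank (ZMod p) (V ⧸ W) ≤ 1 ↔ p ^ finrank (ZMod p) (V ⧸ W) ≤ p := by
    rw [← pow_le_pow_iff_right₀ hp.out.one_lt, pow_one]
  simp [AddSubgroup.toZModSubmodule_symm, W.index_toAddSubgroup, hle]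

theorem stmt_3_general (p m : ℕ) (hp : p.Prime) :
    (∑ᶠ (H : Subgroup (Multiplicative (Fin m → ZMod p))) (_ : H.index ≤ p),
        ∑ᶠ (τ : Multiplicative (Fin m → ZMod p)) (_ : τ ∈ H),
          MonoidAlgebra.of ℤ (Multiplicative (Fin m → ZMod p)) τ)
      + (((p : ℤ) ^ (m - 1) - 1) - ∑ i ∈ Finset.range m, (p : ℤ) ^ i) •
          (∑ᶠ τ : Multiplicative (Fin m → ZMod p),
            MonoidAlgebra.of ℤ (Multiplicative (Fin m → ZMod p)) τ)
      = ((p : ℤ) ^ (m - 1)) •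
          (1 : MonoidAlgebra ℤ (Multiplicative (Fin m → ZMod p))) := by
  have := Fact.mk hp
  refine MonoidAlgebra.ext (Finsupp.ext fun g => ?_)
  have hdim := Subspace.finrank_add_finrank_dualAnnihilator_eq (ZMod p ∙ g.toAdd)
  -- `n` is a fresh variable so that `m`, on which the type of `g` depends, can be substituted.
  obtain ⟨n, hn⟩ : ∃ n, finrank (ZMod p) (ZMod p ∙ g.toAdd).dualAnnihilator = n := ⟨_, rfl⟩
  rw [hn, Module.finrank_fin_fun] at hdim
  simp only [coeff_add, Finsupp.add_apply, coeff_finsum_finsum_mem_of, coeff_smul_apply,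
    coeff_finsum_of, card_subgroup_index_le_mem, card_codim_le_one_mem, hn, Nat.card_zmod, one_def,
    coeff_single, Finsupp.single_apply]
  by_cases hg : g = 1
  · have hpoint : finrank (ZMod p) (ZMod p ∙ g.toAdd) = 0 := by simp [hg]
    rw [hpoint, zero_add] at hdim
    subst hdim hg
    simp
  · have hline : finrank (ZMod p) (ZMod p ∙ g.toAdd) = 1 := finrank_span_singleton (by simpa)
    rw [hline, add_comm] at hdim
    subst hdim
    simp only [Nat.cast_add, Nat.cast_one, Nat.cast_sum, Nat.cast_pow, add_tsub_cancel_right,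
      Finset.sum_range_succ, Int.zsmul_eq_mul, mul_one, Ne.symm hg, ↓reduceIte, mul_zero]
    ring

theorem stmt_3 (p m : ℕ) (hp : p.Prime) (hm : 1 ≤ m) :
    (∑ᶠ (H : Subgroup (Multiplicative (Fin m → ZMod p))) (_ : H.index ≤ p),
        ∑ᶠ (τ : Multiplicative (Fin m → ZMod p)) (_ : τ ∈ H),
          MonoidAlgebra.of ℤ (Multiplicative (Fin m → ZMod p)) τ)
      + (((p : ℤ) ^ (m - 1) - 1) - ∑ i ∈ Finset.range m, (p : ℤ) ^ i) •
          (∑ᶠ τ : Multiplicative (Fin m → ZMod p),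
            MonoidAlgebra.of ℤ (Multiplicative (Fin m → ZMod p)) τ)
      = ((p : ℤ) ^ (m - 1)) •
          (1 : MonoidAlgebra ℤ (Multiplicative (Fin m → ZMod p))) :=
  stmt_3_general p m hp
end

section
/- Let G be cyclic of prime order p with generator σ and k ≥ 1 an integer. Then in ℤ[G] the element (σ − 1)^k is divisible by p^{max{0, ⌊(k−1)/(p−1)⌋}} · (σ − 1). -/
/-!
Put `t = σ - 1`. Since `(t + 1) ^ p = σ ^ p = 1`, the binomial expansion shows `t ^ p = -p t r`,
so `p t ∣ t ^ p`. Each further factor `t ^ (p - 1)` therefore gains a factor `p`, giving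
`p ^ q t ∣ t ^ ((p - 1) q + 1)`, and `(p - 1) q + 1 ≤ k` for `q = ⌊(k - 1)/(p - 1)⌋`.
-/

theorem mul_dvd_pow_prime_of_add_one_pow_eq_one {R : Type*} [CommRing R] {p : ℕ}
    (hp : p.Prime) {t : R} (h : (t + 1) ^ p = 1) : (p : R) * t ∣ t ^ p := by
  obtain ⟨r, hr⟩ := exists_add_pow_prime_eq hp t 1
  rw [h, one_pow, mul_one] at hr
  exact ⟨-r, by linear_combination -hr⟩

theorem pow_mul_dvd_pow_mul_add_one {M : Type*} [CommMonoid M] {a t : M} {n : ℕ}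
    (h : a * t ∣ t ^ (n + 1)) (q : ℕ) : a ^ q * t ∣ t ^ (n * q + 1) := by
  induction q with
  | zero => simp
  | succ q ih =>
    calc a ^ (q + 1) * t = a ^ q * (a * t) := by rw [pow_succ, mul_assoc]
      _ ∣ a ^ q * t ^ (n + 1) := mul_dvd_mul_left _ h
      _ = a ^ q * t * t ^ n := by rw [pow_succ', mul_assoc]
      _ ∣ t ^ (n * q + 1) * t ^ n := mul_dvd_mul_right ih _
      _ = t ^ (n * (q + 1) + 1) := by rw [← pow_add]; ring_nf

theorem stmt_7_general (p : ℕ) (hp : p.Prime) (G : Type) [CommGroup G] (σ : G)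
    (hσ : orderOf σ = p)
    (k : ℕ) (hk : 1 ≤ k) :
    ∃ x : MonoidAlgebra ℤ G,
      (MonoidAlgebra.of ℤ G σ - 1) ^ k =
        (p : MonoidAlgebra ℤ G) ^ ((k - 1) / (p - 1)) *
          (MonoidAlgebra.of ℤ G σ - 1) * x := by
  set t : MonoidAlgebra ℤ G := MonoidAlgebra.of ℤ G σ - 1
  have ht : (t + 1) ^ p = 1 := by
    rw [sub_add_cancel, ← map_pow, ← hσ, pow_orderOf_eq_one, map_one]
  have hdvd : (p : MonoidAlgebra ℤ G) * t ∣ t ^ (p - 1 + 1) := by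
    rw [Nat.sub_add_cancel hp.one_le]
    exact mul_dvd_pow_prime_of_add_one_pow_eq_one hp ht
  have hle : (p - 1) * ((k - 1) / (p - 1)) + 1 ≤ k := by
    have := Nat.mul_div_le (k - 1) (p - 1)
    omega
  exact (pow_mul_dvd_pow_mul_add_one hdvd _).trans (pow_dvd_pow t hle)

theorem stmt_7 (p : ℕ) (hp : p.Prime) (G : Type) [CommGroup G] (σ : G)
    (hσ : orderOf σ = p) (hgen : ∀ g : G, g ∈ Subgroup.zpowers σ)
    (k : ℕ) (hk : 1 ≤ k) :
    ∃ x : MonoidAlgebra ℤ G,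
      (MonoidAlgebra.of ℤ G σ - 1) ^ k =
        (p : MonoidAlgebra ℤ G) ^ ((k - 1) / (p - 1)) *
          (MonoidAlgebra.of ℤ G σ - 1) * x :=
  stmt_7_general p hp G σ hσ k hk
end

section
/- Let G be a cyclic group with generator σ, P a free ℤ[G]-module of finite rank, c ≥ 0 an integer, and x ∈ P an element with (σ − 1)^{1+c} x = 0. Then already (σ − 1)x = 0. -/
/-!
`ℤ[G]` embeds into `ℚ[G]`, which is semisimple by Maschke's theorem and hence reduced. Over a
reduced commutative ring, `a ^ n * r = 0` forces `(a * r) ^ (n + 1) = 0`, so `a * r = 0`; applying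
this to the coordinates of `x` in a basis of the free module `P` gives the claim.
-/

open MonoidAlgebra

instance MonoidAlgebra.isReduced_rat (G : Type*) [CommGroup G] [Finite G] :
    IsReduced (MonoidAlgebra ℚ G) :=
  have : NeZero (Nat.card G : ℚ) := ⟨Nat.cast_ne_zero.mpr Nat.card_pos.ne'⟩
  inferInstance

instance MonoidAlgebra.isReduced_int (G : Type*) [CommGroup G] [Finite G] :
    IsReduced (MonoidAlgebra ℤ G) :=
  isReduced_of_injective (mapRingHom G (Int.castRingHom ℚ)) (map_injective _ Int.cast_injective)

theorem mul_eq_zero_of_pow_mul_eq_zero {R : Type*} [CommMonoidWithZero R] [IsReduced R]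
    {a r : R} {n : ℕ} (h : a ^ n * r = 0) : a * r = 0 :=
  IsReduced.eq_zero _ ⟨n + 1, by rw [mul_pow, pow_succ, pow_succ', mul_mul_mul_comm, h, zero_mul]⟩

theorem Module.Free.smul_eq_zero_of_pow_smul_eq_zero {R M : Type*} [CommRing R] [IsReduced R]
    [AddCommGroup M] [Module R M] [Module.Free R M] {a : R} {x : M} {n : ℕ}
    (h : a ^ n • x = 0) : a • x = 0 := by
  let b := Module.Free.chooseBasis R M
  rw [← b.repr.map_eq_zero_iff, map_smul] at h ⊢
  ext i
  have hi := DFunLike.congr_fun h i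
  simp only [Finsupp.smul_apply, smul_eq_mul, Finsupp.coe_zero, Pi.zero_apply] at hi ⊢
  exact mul_eq_zero_of_pow_mul_eq_zero hi

theorem stmt_9_general (G : Type) [CommGroup G] [Finite G] (σ : G)
    (P : Type) [AddCommGroup P] [Module (MonoidAlgebra ℤ G) P]
    [Module.Free (MonoidAlgebra ℤ G) P]
    (c : ℕ) (x : P) (hx : (MonoidAlgebra.of ℤ G σ - 1) ^ (1 + c) • x = 0) :
    (MonoidAlgebra.of ℤ G σ - 1) • x = 0 :=
  Module.Free.smul_eq_zero_of_pow_smul_eq_zero hx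

theorem stmt_9 (G : Type) [CommGroup G] [Finite G] (σ : G)
    (hgen : ∀ g : G, g ∈ Subgroup.zpowers σ)
    (P : Type) [AddCommGroup P] [Module (MonoidAlgebra ℤ G) P]
    [Module.Free (MonoidAlgebra ℤ G) P] [Module.Finite (MonoidAlgebra ℤ G) P]
    (c : ℕ) (x : P) (hx : (MonoidAlgebra.of ℤ G σ - 1) ^ (1 + c) • x = 0) :
    (MonoidAlgebra.of ℤ G σ - 1) • x = 0 :=
  stmt_9_general G σ P c x hx
end
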